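/- For every finite plane tree T with n vertices, the rotated tree rot T has 2n−1 vertices and its Łukasiewicz walk equals the contour process of T followed by a final step down to −1: S_{rot T}(k) = C_T(k) for all 0 ≤ k ≤ 2n−2, and S_{rot T}(2n−1) = −1. -/

import Mathlib

inductive PTree : Type
  | node : List PTree → PTree

namespace PTree

instance : Inhabited PTree := ⟨node []⟩

mutual
def size : PTree → ℕ
  | node ts => 1 + sizeList ts
def sizeList : List PTree → ℕ
  | [] => 0
  | t :: ts => size t + sizeList ts
end

def deg : PTree → ℕ
  | node ts => ts.length

mutual
def degreesAux : PTree → List ℕ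
  | node ts => ts.length :: degreesListAux ts
def degreesListAux : List PTree → List ℕ
  | [] => []
  | t :: ts => degreesAux t ++ degreesListAux ts
end

mutual
def heightsAux : PTree → ℕ → List ℕ
  | node ts, d => d :: heightsListAux ts (d + 1)
def heightsListAux : List PTree → ℕ → List ℕ
  | [], _ => []
  | t :: ts, d => heightsAux t d ++ heightsListAux ts d
end

mutual
def contourAux : PTree → ℕ → List ℕ
  | node ts, d => d :: contourListAux ts (d + 1)
def contourListAux : List PTree → ℕ → List ℕ
  | [], _ => []
  | t :: ts, d => contourAux t d ++ (d - 1) :: contourListAux ts d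
end

mutual
def verticesAux : PTree → List ℕ → List (List ℕ)
  | node ts, p => p :: verticesListAux ts p 0
def verticesListAux : List PTree → List ℕ → ℕ → List (List ℕ)
  | [], _, _ => []
  | t :: ts, p, i => verticesAux t (p ++ [i]) ++ verticesListAux ts p (i + 1)
end

def vertices (T : PTree) : List (List ℕ) := verticesAux T []

/-- Height process of a plane tree. -/
def H (T : PTree) (k : ℕ) : ℕ := (heightsAux T 0).getD k 0

/-- Contour process of a plane tree. -/
def C (T : PTree) (k : ℕ) : ℕ := (contourAux T 0).getD k 0

/-- Łukasiewicz walk of a plane tree. -/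
def S (T : PTree) (k : ℕ) : ℤ :=
  (((degreesAux T).take k).map (fun d => (d : ℤ) - 1)).sum

def subtreeAt : List ℕ → PTree → Option PTree
  | [], t => some t
  | i :: p, node ts => (ts[i]?).bind (subtreeAt p)

def isInternal (T : PTree) (p : List ℕ) : Bool :=
  match subtreeAt p T with
  | some (node (_ :: _)) => true
  | _ => false

def isVertex (T : PTree) (p : List ℕ) : Bool := (subtreeAt p T).isSome

def rot : PTree → PTree
  | node [] => node []
  | node (t :: ts) => node [rot t, rot (node ts)]

mutual
def corot : PTree → PTree
  | node ts => corotAux ts (node [])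
def corotAux : List PTree → PTree → PTree
  | [], acc => acc
  | t :: ts, acc => corotAux ts (node [acc, corot t])
end

mutual
def mirror : PTree → PTree
  | node ts => node (mirrorList ts)
def mirrorList : List PTree → List PTree
  | [] => []
  | t :: ts => mirrorList ts ++ [mirror t]
end

mutual
def internalTree : PTree → PTree
  | node ts => node (internalList ts)
def internalList : List PTree → List PTree
  | [] => []
  | node [] :: ts => internalList ts
  | t :: ts => internalTree t :: internalList ts
end

def mirrorPath : PTree → List ℕ → List ℕ
  | _, [] => []
  | node ts, i :: p =>
      (ts.length - 1 - i) ::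
        (match ts[i]? with
         | some t => mirrorPath t p
         | none => p)

def lexLt : List ℕ → List ℕ → Bool
  | _, [] => false
  | [], _ :: _ => true
  | a :: as, b :: bs => if a < b then true else if a = b then lexLt as bs else false

def nonRootVertices (T : PTree) : List (List ℕ) := (vertices T).tail

def internalVertices (T : PTree) : List (List ℕ) :=
  (vertices T).filter (fun p => isInternal T p)

/-- the order-preserving identification between non-root vertices of `T` and
internal vertices of `rot T`. -/
def iota (T : PTree) (u : List ℕ) : List ℕ :=
  (internalVertices (rot T)).getD ((nonRootVertices T).idxOf u) []

/-- `L(u)`: number of edges grafted on the left of the ancestral line of `u`. -/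
def Lnum (T : PTree) (u : List ℕ) : ℕ :=
  ((vertices T).filter (fun w =>
      !w.isEmpty && (w.dropLast.isPrefixOf u && w.dropLast != u)
        && !(w.isPrefixOf u && w != u) && lexLt w u)).length

/-- mirrored enumeration of `T`. -/
def mirroredEnum (T : PTree) (k : ℕ) : List ℕ :=
  mirrorPath (mirror T) ((vertices (mirror T)).getD k [])

def descendR (T : PTree) : ℕ → List ℕ → List ℕ
  | 0, p => p
  | fuel + 1, p => if isInternal T (p ++ [1]) then descendR T fuel (p ++ [1]) else p

def ascend (visited : List (List ℕ)) : ℕ → List ℕ → List ℕ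
  | 0, p => p.dropLast
  | fuel + 1, p => if p.dropLast ∈ visited then ascend visited fuel p.dropLast else p.dropLast

def rightmostSeq (T : PTree) : ℕ → List (List ℕ)
  | 0 => []
  | k + 1 =>
      let prev := rightmostSeq T k
      let next :=
        match prev.getLast? with
        | none => descendR T (size T) []
        | some p =>
            if isInternal T (p ++ [0]) then descendR T (size T) (p ++ [0])
            else ascend prev (size T) p
      prev ++ [next]

def Hstar (T : PTree) (k : ℕ) : ℤ :=
  if k = 0 ∨ size T ≤ k then 0 else ((iota T (mirroredEnum T k)).length : ℤ)

end PTree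

/-!
In lexicographic order, `rot (node (t :: ts))` lists its root (degree 2, a step `+1`), then
`rot t`, then `rot (node ts)`, while the contour of `node (t :: ts)` goes up to `t`, runs the
contour of `t` one level higher, comes back down and continues with the contour of `node ts`.
Each `rot` subtree ends with a leaf, i.e. a step `-1`, which is exactly the step back down from
`t` to the root. Hence, by induction along the recursion of `rot`, the Łukasiewicz walk of `rot T`
started at height `x` and continued by arbitrary further steps `E` is the contour of `T` started
at `x`, followed by the walk of `E` started at `x - 1`.
-/

namespace PTree

mutual
theorem length_degreesAux : ∀ T : PTree, (degreesAux T).length = size T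
  | node ts => by
      rw [degreesAux, size, List.length_cons, length_degreesListAux ts, Nat.add_comm]
theorem length_degreesListAux : ∀ ts : List PTree, (degreesListAux ts).length = sizeList ts
  | [] => rfl
  | t :: ts => by
      rw [degreesListAux, sizeList, List.length_append, length_degreesAux t,
        length_degreesListAux ts]
end

theorem size_rot_add_one : ∀ T : PTree, size (rot T) + 1 = 2 * size T
  | node [] => by simp [rot, size, sizeList]
  | node (t :: ts) => by
      have ht := size_rot_add_one t
      have hts := size_rot_add_one (node ts)
      simp only [rot, size, sizeList] at *
      omega

def lukasiewiczSteps (T : PTree) : List ℤ := (degreesAux T).map fun d : ℕ => (d : ℤ) - 1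

theorem S_eq_getD_partialSums (T : PTree) {k : ℕ} (hk : k ≤ size T) :
    S T k = (lukasiewiczSteps T).partialSums.getD k 0 := by
  have hk' : k < (lukasiewiczSteps T).partialSums.length := by
    simp [lukasiewiczSteps, length_degreesAux]; omega
  rw [List.getD_eq_getElem _ _ hk', List.getElem_partialSums]
  simp [S, lukasiewiczSteps, ← List.map_eq_flatMap, List.map_take, Function.comp_def]

theorem scanl_lukasiewiczSteps_rot_append : ∀ (T : PTree) (x : ℕ) (E : List ℤ),
    (lukasiewiczSteps (rot T) ++ E).scanl (· + ·) (x : ℤ) =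
      (contourAux T x).map (↑) ++ E.scanl (· + ·) ((x : ℤ) - 1)
  | node [], x, E => by
      simp [rot, lukasiewiczSteps, degreesAux, degreesListAux, contourAux, contourListAux,
        sub_eq_add_neg]
  | node (t :: ts), x, E => by
      have ht :=
        scanl_lukasiewiczSteps_rot_append t (x + 1) (lukasiewiczSteps (rot (node ts)) ++ E)
      have hts := scanl_lukasiewiczSteps_rot_append (node ts) x E
      have hsteps : lukasiewiczSteps (rot (node (t :: ts))) =
          1 :: (lukasiewiczSteps (rot t) ++ lukasiewiczSteps (rot (node ts))) := by
        simp [rot, lukasiewiczSteps, degreesAux, degreesListAux]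
      push_cast at ht
      rw [add_sub_cancel_right] at ht
      rw [hsteps, List.cons_append, List.scanl_cons, List.append_assoc, ht, hts]
      simp [contourAux, contourListAux]

theorem partialSums_lukasiewiczSteps_rot (T : PTree) :
    (lukasiewiczSteps (rot T)).partialSums = (contourAux T 0).map (↑) ++ [-1] := by
  simpa [List.partialSums] using scanl_lukasiewiczSteps_rot_append T 0 []

end PTree

open PTree

theorem stmt8 (T : PTree) :
    size (rot T) = 2 * size T - 1 ∧
    (∀ k ≤ 2 * size T - 2, S (rot T) k = (C T k : ℤ)) ∧
    S (rot T) (2 * size T - 1) = -1 := by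
  have hsize := size_rot_add_one T
  have hwalk := partialSums_lukasiewiczSteps_rot T
  have hlen : (contourAux T 0).length = size (rot T) := by
    simpa [lukasiewiczSteps, length_degreesAux] using (congrArg List.length hwalk).symm
  refine ⟨by omega, fun k hk => ?_, ?_⟩
  · rw [S_eq_getD_partialSums _ (by omega), hwalk, List.getD_append _ _ _ _ (by simp; omega)]
    rw [C, ← List.getD_map (f := ((↑) : ℕ → ℤ))]
    rfl
  · rw [S_eq_getD_partialSums _ (by omega), hwalk,
      List.getD_append_right _ _ _ _ (by simp; omega)]
    simp [hlen, show 2 * size T - 1 - size (rot T) = 0 by omega]
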